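/- arXiv:2303.05020 — 2 statements merged into one kernel-verified Lean document; each statement's English description precedes it below -/
import Mathlib

section
/- Fix d ≥ 1, μ > -1/2, θ > 0, c > 0, n ≥ 0 and β = sqrt(c + (n+d/2-1)² + μ(μ+d-2))/θ. For k ≥ 1 and α > -1, the radial function u(r) = r^{θβ+1-d/2-μ} P_k^{(α,β)}(2r^{2θ}-1) on (0,1) satisfies -r^{2μ}[u''(r) + ((2μ+d-1)/r) u'(r) - ((n(n+d-2)+c)/r²) u(r)] = -4θ²(k+β)(k+α+β+1) r^{2θ-2+2μ} · r^{θβ+1-d/2-μ} P_{k-1}^{(α+2,β)}(2r^{2θ}-1). -/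
open Real MeasureTheory Finset

noncomputable def jacobiP (n : ℕ) (a b : ℝ) (x : ℝ) : ℝ :=
  ∑ k ∈ Finset.range (n + 1),
    (ascPochhammer ℝ k).eval ((n : ℝ) + a + b + 1) *
      (ascPochhammer ℝ (n - k)).eval (a + (k : ℝ) + 1) /
      ((k.factorial : ℝ) * ((n - k).factorial : ℝ)) * ((x - 1) / 2) ^ k

/-!
With `s = r ^ (2θ)` and `γ = θβ + 1 - d/2 - μ`, the radial operator
`u ↦ u'' + (2μ+d-1)/r u' - (n(n+d-2)+c)/r² u` maps `r ^ γ F(s)` to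
`r ^ (γ - 2)` times `(γ(γ-1) + (2μ+d-1)γ - n(n+d-2) - c) F + 4θ²(β+1) s F' + 4θ² s² F''`.
The choice of `β` makes `γ` an indicial root, so the first term vanishes, and in the variable
`y = s - 1 = (x - 1)/2` what is left is `4θ² s ((1+y) P'' + (β+1) P')` for `P = P_k^{(α,β)}`.
Comparing coefficients of the hypergeometric expansion of `P` in powers of `y` shows that
`(1+y) ∂² + (β+1) ∂` sends `P_k^{(α,β)}` to `(k+β)(k+α+β+1) P_{k-1}^{(α+2,β)}`.
-/

open Polynomial

theorem ascPochhammer_eval_succ_left {S : Type*} [CommSemiring S] (n : ℕ) (x : S) :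
    (ascPochhammer S (n + 1)).eval x = x * (ascPochhammer S n).eval (x + 1) := by
  rw [ascPochhammer_succ_left, eval_mul, eval_X, eval_comp, eval_add, eval_X, eval_one]

theorem coeff_X_mul_derivative {R : Type*} [Semiring R] (p : R[X]) (i : ℕ) :
    (X * derivative p).coeff i = i * p.coeff i := by
  cases i with
  | zero => simp
  | succ i => rw [coeff_X_mul, coeff_derivative, ← Nat.cast_succ, Nat.cast_comm]

noncomputable def jacobiCoeff (k : ℕ) (a b : ℝ) (j : ℕ) : ℝ :=
  (ascPochhammer ℝ j).eval ((k : ℝ) + a + b + 1) *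
    (ascPochhammer ℝ (k - j)).eval (a + (j : ℝ) + 1) / (j.factorial * (k - j).factorial)

noncomputable def jacobiPoly (k : ℕ) (a b : ℝ) : ℝ[X] :=
  ∑ j ∈ range (k + 1), C (jacobiCoeff k a b j) * X ^ j

theorem jacobiP_eq_eval_jacobiPoly (k : ℕ) (a b x : ℝ) :
    jacobiP k a b x = (jacobiPoly k a b).eval ((x - 1) / 2) := by
  simp [jacobiP, jacobiPoly, jacobiCoeff, eval_finsetSum]

theorem coeff_jacobiPoly (k : ℕ) (a b : ℝ) (j : ℕ) :
    (jacobiPoly k a b).coeff j = if j ≤ k then jacobiCoeff k a b j else 0 := by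
  simp [jacobiPoly]

theorem jacobiCoeff_lowering (i q : ℕ) (a b : ℝ) :
    (i + 1) * (i + b + 1) * jacobiCoeff (i + q + 2) a b (i + 1)
      + (i + 2) * (i + 1) * jacobiCoeff (i + q + 2) a b (i + 2)
    = ((i + q + 2 : ℕ) + b) * ((i + q + 2 : ℕ) + a + b + 1) *
        jacobiCoeff (i + q + 1) (a + 2) b i := by
  simp only [jacobiCoeff, show i + q + 2 - (i + 1) = q + 1 by omega,
    show i + q + 2 - (i + 2) = q by omega, show i + q + 1 - i = q + 1 by omega]
  rw [ascPochhammer_eval_succ_left i, ascPochhammer_eval_succ_left (i + 1),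
    ascPochhammer_succ_eval i, ascPochhammer_succ_eval q (a + 2 + i + 1),
    ascPochhammer_eval_succ_left q, show i + 2 = (i + 1) + 1 from rfl,
    Nat.factorial_succ (i + 1), Nat.factorial_succ i, Nat.factorial_succ q]
  push_cast
  ring_nf
  field_simp
  ring

theorem jacobiCoeff_lowering_top (k : ℕ) (a b : ℝ) :
    (k + 1) * (k + 1 + b) * jacobiCoeff (k + 1) a b (k + 1)
      = ((k + 1 : ℕ) + b) * ((k + 1 : ℕ) + a + b + 1) * jacobiCoeff k (a + 2) b k := by
  simp only [jacobiCoeff, Nat.sub_self, ascPochhammer_eval_succ_left, Nat.factorial_succ,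
    ascPochhammer_zero, eval_one]
  push_cast
  ring_nf
  field_simp
  ring

theorem jacobiPoly_succ_lowering (k : ℕ) (a b : ℝ) :
    (1 + X) * derivative (derivative (jacobiPoly (k + 1) a b))
        + C (b + 1) * derivative (jacobiPoly (k + 1) a b)
      = C (((k + 1 : ℕ) + b) * ((k + 1 : ℕ) + a + b + 1)) * jacobiPoly k (a + 2) b := by
  ext i
  simp only [coeff_add, add_mul, one_mul, coeff_C_mul, coeff_X_mul_derivative, coeff_derivative,
    coeff_jacobiPoly]
  rcases lt_trichotomy i k with hik | rfl | hki
  · obtain ⟨q, rfl⟩ := Nat.exists_eq_add_of_lt hik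
    simp only [show i + 1 + 1 ≤ i + q + 1 + 1 by omega, show i + 1 ≤ i + q + 1 + 1 by omega,
      show i ≤ i + q + 1 by omega, if_true]
    have h := jacobiCoeff_lowering i q a b
    push_cast at h ⊢
    linear_combination h
  · simp only [show ¬ i + 1 + 1 ≤ i + 1 by omega, le_refl, if_true, if_false]
    have h := jacobiCoeff_lowering_top i a b
    push_cast at h ⊢
    linear_combination h
  · simp only [show ¬ i + 1 + 1 ≤ k + 1 by omega, show ¬ i + 1 ≤ k + 1 by omega,
      show ¬ i ≤ k by omega, if_false]
    ring

section Radial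

noncomputable def radialOp (A B : ℝ) (u : ℝ → ℝ) (r : ℝ) : ℝ :=
  deriv (deriv u) r + A / r * deriv u r - B / r ^ 2 * u r

theorem radialOp_congr {A B r : ℝ} {u v : ℝ → ℝ} (h : u =ᶠ[nhds r] v) :
    radialOp A B u r = radialOp A B v r := by
  rw [radialOp, radialOp, h.deriv.deriv_eq, h.deriv_eq, h.eq_of_nhds]

variable {F F' F'' : ℝ → ℝ} {r : ℝ}

theorem hasDerivAt_rpow_mul_comp_rpow (hF : ∀ s, 0 < s → HasDerivAt F (F' s) s) (γ σ : ℝ)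
    (hr : 0 < r) :
    HasDerivAt (fun r => r ^ γ * F (r ^ σ))
      (r ^ (γ - 1) * (γ * F (r ^ σ) + σ * r ^ σ * F' (r ^ σ))) r := by
  refine ((hasDerivAt_rpow_const (p := γ) (Or.inl hr.ne')).fun_mul
    ((hF _ (rpow_pos_of_pos hr σ)).comp r (hasDerivAt_rpow_const (Or.inl hr.ne')))).congr_deriv ?_
  rw [Function.comp_apply, rpow_sub_one hr.ne', rpow_sub_one hr.ne']
  field_simp

theorem deriv_deriv_rpow_mul_comp_rpow (hF : ∀ s, 0 < s → HasDerivAt F (F' s) s)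
    (hF' : ∀ s, 0 < s → HasDerivAt F' (F'' s) s) (γ σ : ℝ) (hr : 0 < r) :
    deriv (deriv fun r => r ^ γ * F (r ^ σ)) r =
      r ^ (γ - 2) * ((γ - 1) * (γ * F (r ^ σ) + σ * r ^ σ * F' (r ^ σ))
        + σ * r ^ σ * ((γ + σ) * F' (r ^ σ) + σ * r ^ σ * F'' (r ^ σ))) := by
  have hG : ∀ s, 0 < s → HasDerivAt (fun s => γ * F s + σ * s * F' s)
      ((γ + σ) * F' s + σ * s * F'' s) s := fun s hs => by
    refine (((hF s hs).const_mul γ).fun_add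
      (((hasDerivAt_id s).const_mul σ).fun_mul (hF' s hs))).congr_deriv ?_
    simp only [id]
    ring
  have hderiv : deriv (fun r => r ^ γ * F (r ^ σ)) =ᶠ[nhds r]
      fun r => r ^ (γ - 1) * (γ * F (r ^ σ) + σ * r ^ σ * F' (r ^ σ)) :=
    Filter.eventually_of_mem (Ioi_mem_nhds hr) fun r hr =>
      (hasDerivAt_rpow_mul_comp_rpow hF γ σ hr).deriv
  rw [hderiv.deriv_eq, (hasDerivAt_rpow_mul_comp_rpow hG (γ - 1) σ hr).deriv,
    show γ - 1 - 1 = γ - 2 by ring]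

theorem radialOp_rpow_mul_comp_rpow (hF : ∀ s, 0 < s → HasDerivAt F (F' s) s)
    (hF' : ∀ s, 0 < s → HasDerivAt F' (F'' s) s) (A B γ σ : ℝ) (hr : 0 < r) :
    radialOp A B (fun r => r ^ γ * F (r ^ σ)) r =
      r ^ (γ - 2) * ((γ * (γ - 1) + A * γ - B) * F (r ^ σ)
        + σ * (2 * γ + σ - 1 + A) * r ^ σ * F' (r ^ σ)
        + σ ^ 2 * (r ^ σ) ^ 2 * F'' (r ^ σ)) := by
  have h1 : r ^ (γ - 1) = r ^ (γ - 2) * r := by rw [← rpow_add_one hr.ne']; ring_nf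
  have h2 : r ^ γ = r ^ (γ - 2) * r ^ 2 := by
    rw [← rpow_natCast, ← rpow_add hr]; ring_nf
  rw [radialOp, deriv_deriv_rpow_mul_comp_rpow hF hF' γ σ hr,
    (hasDerivAt_rpow_mul_comp_rpow hF γ σ hr).deriv, h1, h2]
  field_simp
  ring

end Radial

theorem radialOp_rpow_mul_jacobiP_succ (k : ℕ) {a b A B γ σ r : ℝ}
    (hγ : γ * (γ - 1) + A * γ - B = 0) (hA : 2 * γ + σ - 1 + A = σ * (b + 1)) (hr : 0 < r) :
    radialOp A B (fun r => r ^ γ * jacobiP (k + 1) a b (2 * r ^ σ - 1)) r =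
      σ ^ 2 * ((k + 1 : ℕ) + b) * ((k + 1 : ℕ) + a + b + 1) * r ^ (γ - 2 + σ) *
        jacobiP k (a + 2) b (2 * r ^ σ - 1) := by
  have hv : (fun r => r ^ γ * jacobiP (k + 1) a b (2 * r ^ σ - 1)) =
      fun r => r ^ γ * (jacobiPoly (k + 1) a b).eval (r ^ σ - 1) := by
    funext r
    rw [jacobiP_eq_eval_jacobiPoly]
    ring_nf
  have hD (q : ℝ[X]) (s : ℝ) (_ : 0 < s) :
      HasDerivAt (fun s => q.eval (s - 1)) ((derivative q).eval (s - 1)) s :=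
    (q.hasDerivAt (s - 1)).comp_sub_const s 1
  have hlow := congrArg (eval (r ^ σ - 1)) (jacobiPoly_succ_lowering k a b)
  simp only [eval_add, eval_mul, eval_C, eval_one, eval_X] at hlow
  rw [hv, radialOp_rpow_mul_comp_rpow (hD _) (hD _) A B γ σ hr, hγ, hA, rpow_add hr,
    jacobiP_eq_eval_jacobiPoly, show (2 * r ^ σ - 1 - 1) / 2 = r ^ σ - 1 by ring]
  linear_combination (σ ^ 2 * r ^ (γ - 2) * r ^ σ) * hlow

theorem indicial_eq_zero {d m t c b γ : ℝ} (n : ℕ) (hd : 1 ≤ d) (hc : 0 ≤ c) (ht : t ≠ 0)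
    (hb : b = √(c + (n + d / 2 - 1) ^ 2 + m * (m + d - 2)) / t)
    (hγ : γ = t * b + 1 - d / 2 - m) :
    γ * (γ - 1) + (2 * m + d - 1) * γ - (n * (n + d - 2) + c) = 0 := by
  have hn : 0 ≤ (n : ℝ) * (n + d - 2) := by
    rcases n.eq_zero_or_pos with rfl | hn
    · simp
    · have : (1 : ℝ) ≤ n := by exact_mod_cast hn
      exact mul_nonneg (by linarith) (by linarith)
  have hR : 0 ≤ c + (n + d / 2 - 1) ^ 2 + m * (m + d - 2) := by
    nlinarith [sq_nonneg (m + d / 2 - 1)]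
  have htb : (t * b) ^ 2 = c + (n + d / 2 - 1) ^ 2 + m * (m + d - 2) := by
    rw [hb, mul_div_cancel₀ _ ht, sq_sqrt hR]
  subst hγ
  linear_combination htb

theorem stmt17_general (d m t c : ℝ) (hd : 1 ≤ d) (ht : 0 < t) (hc : 0 < c)
    (n : ℕ)
    (b : ℝ) (hb : b = Real.sqrt (c + ((n : ℝ) + d / 2 - 1) ^ 2 + m * (m + d - 2)) / t)
    (k : ℕ) (hk : 1 ≤ k) (a : ℝ)
    (u : ℝ → ℝ)
    (hu : ∀ r ∈ Set.Ioo (0:ℝ) 1,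
      u r = r ^ (t * b + 1 - d / 2 - m) * jacobiP k a b (2 * r ^ (2 * t) - 1)) :
    ∀ r ∈ Set.Ioo (0:ℝ) 1,
      -(r ^ (2 * m)) * (deriv (deriv u) r + ((2 * m + d - 1) / r) * deriv u r -
          (((n : ℝ) * ((n : ℝ) + d - 2) + c) / r ^ 2) * u r) =
        -4 * t ^ 2 * ((k : ℝ) + b) * ((k : ℝ) + a + b + 1) * r ^ (2 * t - 2 + 2 * m) *
          (r ^ (t * b + 1 - d / 2 - m) * jacobiP (k - 1) (a + 2) b (2 * r ^ (2 * t) - 1)) := by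
  intro r hr
  obtain ⟨k, rfl⟩ := Nat.exists_eq_add_of_le' hk
  have hloc : u =ᶠ[nhds r]
      fun r => r ^ (t * b + 1 - d / 2 - m) * jacobiP (k + 1) a b (2 * r ^ (2 * t) - 1) :=
    Filter.eventually_of_mem (Ioo_mem_nhds hr.1 hr.2) hu
  have hpow : r ^ (2 * m) * r ^ (t * b + 1 - d / 2 - m - 2 + 2 * t) =
      r ^ (2 * t - 2 + 2 * m) * r ^ (t * b + 1 - d / 2 - m) := by
    rw [← rpow_add hr.1, ← rpow_add hr.1]
    ring_nf
  change -(r ^ (2 * m)) * radialOp (2 * m + d - 1) (n * (n + d - 2) + c) u r = _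
  rw [radialOp_congr hloc, radialOp_rpow_mul_jacobiP_succ k
    (indicial_eq_zero n hd hc.le ht.ne' hb rfl) (by ring) hr.1, Nat.add_sub_cancel]
  linear_combination (-4 * t ^ 2 * ((k + 1 : ℕ) + b) * ((k + 1 : ℕ) + a + b + 1) *
    jacobiP k (a + 2) b (2 * r ^ (2 * t) - 1)) * hpow

theorem stmt17 (d m t c : ℝ) (hd : 1 ≤ d) (hm : -1/2 < m) (ht : 0 < t) (hc : 0 < c)
    (n : ℕ)
    (b : ℝ) (hb : b = Real.sqrt (c + ((n : ℝ) + d / 2 - 1) ^ 2 + m * (m + d - 2)) / t)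
    (k : ℕ) (hk : 1 ≤ k) (a : ℝ) (ha : -1 < a)
    (u : ℝ → ℝ)
    (hu : ∀ r ∈ Set.Ioo (0:ℝ) 1,
      u r = r ^ (t * b + 1 - d / 2 - m) * jacobiP k a b (2 * r ^ (2 * t) - 1)) :
    ∀ r ∈ Set.Ioo (0:ℝ) 1,
      -(r ^ (2 * m)) * (deriv (deriv u) r + ((2 * m + d - 1) / r) * deriv u r -
          (((n : ℝ) * ((n : ℝ) + d - 2) + c) / r ^ 2) * u r) =
        -4 * t ^ 2 * ((k : ℝ) + b) * ((k : ℝ) + a + b + 1) * r ^ (2 * t - 2 + 2 * m) *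
          (r ^ (t * b + 1 - d / 2 - m) * jacobiP (k - 1) (a + 2) b (2 * r ^ (2 * t) - 1)) :=
  stmt17_general d m t c hd ht hc n b hb k hk a u hu
end

section
/- Fix d ≥ 1, μ > -1/2, θ > 0, c > 0, n ≥ 0, α > -1 and β = sqrt(c + (n+d/2-1)² + μ(μ+d-2))/θ. For k ≥ 0, the radial function u(r) = r^{θβ+1-d/2-μ} P_k^{(α,β)}(2r^{2θ}-1) on (0,1) satisfies the Sturm–Liouville equation: -(1/(r^{d+2μ-1}(1-r^{2θ})^α)) d/dr[ r^{d+2μ-1}(1-r^{2θ})^{α+1} u'(r) ] + ((c+n(n+d-2))/r²) u(r) = χ r^{2θ-2} u(r), where χ = (2θk + θβ - μ + 1 - d/2)(2θk + θβ + 2θα + 2θ + μ + d/2 - 1). -/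
/-!
With `y = r^(2t)` and `u = r^γ g(y)`, where `γ = tβ + 1 - d/2 - μ`, each radial derivative
`r ↦ r^e h(r^(2t))` is again of this form, so the Sturm–Liouville expression becomes
`r^(γ-2) (1-y)^α` times a second-order expression in `g(y), g'(y), g''(y)`. The choice of `β`
gives `γ(γ + d + 2μ - 2) = c + n(n + d - 2)`, which cancels the singular `1/r²` term; what is left
is `4t² y` times the hypergeometric equation of the shifted Jacobi polynomial `g(y) = P_k(2y - 1)`,
checked coefficientwise on the explicit sum through the ratio of consecutive coefficients.
-/

open Real MeasureTheory Finset

open Polynomial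

namespace Jacobi

noncomputable def coeff (k : ℕ) (a b : ℝ) (j : ℕ) : ℝ :=
  (ascPochhammer ℝ j).eval ((k : ℝ) + a + b + 1) *
      (ascPochhammer ℝ (k - j)).eval (a + (j : ℝ) + 1) /
      ((j.factorial : ℝ) * ((k - j).factorial : ℝ))

lemma coeff_succ (k : ℕ) (a b : ℝ) {j : ℕ} (hj : j < k) :
    ((j : ℝ) + 1) * ((j : ℝ) + a + 1) * coeff k a b (j + 1) =
      ((k : ℝ) - j) * ((k : ℝ) + j + a + b + 1) * coeff k a b j := by
  obtain ⟨i, hi⟩ : ∃ i, k - j = i + 1 := ⟨k - j - 1, by omega⟩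
  have hki : (k : ℝ) - j = i + 1 := by
    rw [show k = j + i + 1 by omega]; push_cast; ring
  rw [coeff, coeff, show k - (j + 1) = i by omega, hi, ascPochhammer_succ_eval,
    ascPochhammer_succ_left, eval_mul, eval_X, eval_comp, eval_add, eval_X, eval_one, hki,
    Nat.factorial_succ, Nat.factorial_succ]
  have hjf : (j.factorial : ℝ) ≠ 0 := mod_cast j.factorial_ne_zero
  have hif : (i.factorial : ℝ) ≠ 0 := mod_cast i.factorial_ne_zero
  push_cast
  rw [show a + ((j : ℝ) + 1) + 1 = a + j + 1 + 1 by ring]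
  field_simp
  ring

/-- `P_k^{(a,b)}(x)` as a polynomial in `z = (x - 1) / 2`. -/
noncomputable def poly (k : ℕ) (a b : ℝ) : ℝ[X] :=
  ∑ j ∈ range (k + 1), C (coeff k a b j) * X ^ j

lemma coeff_poly (k : ℕ) (a b : ℝ) (j : ℕ) :
    (poly k a b).coeff j = if j ≤ k then coeff k a b j else 0 := by
  simp only [poly, finsetSum_coeff, coeff_C_mul, coeff_X_pow, mul_ite, mul_one, mul_zero,
    sum_ite_eq, mem_range, Nat.lt_succ_iff]

lemma poly_coeff_succ (k : ℕ) (a b : ℝ) (j : ℕ) :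
    ((j : ℝ) + 1) * ((j : ℝ) + a + 1) * (poly k a b).coeff (j + 1) =
      ((k : ℝ) - j) * ((k : ℝ) + j + a + b + 1) * (poly k a b).coeff j := by
  rcases lt_trichotomy j k with h | rfl | h
  · rw [coeff_poly, coeff_poly, if_pos (show j + 1 ≤ k from h), if_pos h.le]
    exact coeff_succ k a b h
  · simp [coeff_poly]
  · simp [coeff_poly, h.not_ge, (h.trans (Nat.lt_succ_self j)).not_ge]

lemma poly_ode (k : ℕ) (a b : ℝ) :
    X * (X + 1) * derivative (derivative (poly k a b)) +
        (C (a + b + 2) * X + C (a + 1)) * derivative (poly k a b) =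
      C ((k : ℝ) * (k + a + b + 1)) * poly k a b := by
  set Q := poly k a b
  have hc := poly_coeff_succ k a b
  rw [show X * (X + 1) * derivative (derivative Q) + (C (a + b + 2) * X + C (a + 1)) * derivative Q
      = derivative (derivative Q) * X * X + derivative (derivative Q) * X
        + C (a + b + 2) * (derivative Q * X) + C (a + 1) * derivative Q by ring]
  ext (_ | _ | i)
  · simp only [coeff_add, mul_coeff_zero, coeff_X_zero, coeff_derivative, coeff_C_zero,
      mul_zero, zero_add]
    push_cast
    linear_combination hc 0
  · simp only [coeff_add, coeff_C_mul, coeff_derivative, coeff_mul_X, mul_coeff_zero,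
      coeff_X_zero, mul_zero, zero_add]
    push_cast
    linear_combination hc 1
  · have h := hc (i + 2)
    simp only [coeff_add, coeff_C_mul, coeff_derivative, coeff_mul_X] at h ⊢
    push_cast at h ⊢
    linear_combination h

lemma jacobiP_eq_eval (k : ℕ) (a b x : ℝ) :
    jacobiP k a b x = (poly k a b).eval ((x - 1) / 2) := by
  simp [jacobiP, poly, coeff, eval_finsetSum]

lemma eval_shift_ode (k : ℕ) (a b y : ℝ) :
    (y - 1) * y * (derivative (derivative (poly k a b))).eval (y - 1) +
        ((a + b + 2) * y - b - 1) * (derivative (poly k a b)).eval (y - 1) =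
      k * (k + a + b + 1) * (poly k a b).eval (y - 1) := by
  have h := congrArg (eval (y - 1)) (poly_ode k a b)
  simp only [eval_add, eval_mul, eval_X, eval_C, eval_one, sub_add_cancel] at h
  linear_combination h

lemma jacobiP_two_mul_sub_one (k : ℕ) (a b y : ℝ) :
    jacobiP k a b (2 * y - 1) = (poly k a b).eval (y - 1) := by
  rw [jacobiP_eq_eval]
  ring_nf

end Jacobi

lemma hasDerivAt_rpow_mul_comp_rpow_s18 {h : ℝ → ℝ} {h' e q s : ℝ} (hs : 0 < s)
    (hh : HasDerivAt h h' (s ^ q)) :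
    HasDerivAt (fun x => x ^ e * h (x ^ q)) (s ^ (e - 1) * (e * h (s ^ q) + q * s ^ q * h')) s := by
  have hpow (p : ℝ) : HasDerivAt (fun x => x ^ p) (p * s ^ (p - 1)) s :=
    hasDerivAt_rpow_const (Or.inl hs.ne')
  refine ((hpow e).mul (hh.comp s (hpow q))).congr_deriv ?_
  rw [Function.comp_apply, rpow_sub_one hs.ne', rpow_sub_one hs.ne']
  field_simp

section RadialSturmLiouville

variable {g g' g'' : ℝ → ℝ} {u : ℝ → ℝ} {γ q : ℝ}

lemma deriv_eqOn_rpow_mul_comp_rpow (hg : ∀ y, HasDerivAt g (g' y) y) {U : Set ℝ}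
    (hU : IsOpen U) (hU₀ : U ⊆ Set.Ioi 0) (hu : Set.EqOn u (fun s => s ^ γ * g (s ^ q)) U) {s : ℝ}
    (hs : s ∈ U) :
    deriv u s = s ^ (γ - 1) * (γ * g (s ^ q) + q * s ^ q * g' (s ^ q)) :=
  ((hu.eventuallyEq_of_mem (hU.mem_nhds hs)).deriv_eq).trans
    (hasDerivAt_rpow_mul_comp_rpow_s18 (hU₀ hs) (hg _)).deriv

/-- With `y = r^q`, the flux `r^p (1 - y)^(a+1) u'(r)` is `r^(p+γ-1) (1-y)^(a+1) G(y)` where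
`G = γ g + q y g'`. -/
lemma deriv_rpow_mul_one_sub_rpow_mul_deriv (hg : ∀ y, HasDerivAt g (g' y) y)
    (hg' : ∀ y, HasDerivAt g' (g'' y) y) (p a : ℝ) (hq : 0 < q)
    (hu : Set.EqOn u (fun s => s ^ γ * g (s ^ q)) (Set.Ioo 0 1)) {r : ℝ} (hr : r ∈ Set.Ioo 0 1) :
    deriv (fun s => s ^ p * (1 - s ^ q) ^ (a + 1) * deriv u s) r =
      r ^ (p + γ - 2) * (1 - r ^ q) ^ a *
        ((p + γ - 1) * (1 - r ^ q) * (γ * g (r ^ q) + q * r ^ q * g' (r ^ q)) +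
          q * r ^ q * (-(a + 1) * (γ * g (r ^ q) + q * r ^ q * g' (r ^ q)) +
            (1 - r ^ q) * ((γ + q) * g' (r ^ q) + q * r ^ q * g'' (r ^ q)))) := by
  set G : ℝ → ℝ := fun y => γ * g y + q * y * g' y
  set H : ℝ → ℝ := fun y => (1 - y) ^ (a + 1) * G y
  have hflux : Set.EqOn (fun s => s ^ p * (1 - s ^ q) ^ (a + 1) * deriv u s)
      (fun s => s ^ (p + γ - 1) * H (s ^ q)) (Set.Ioo 0 1) := by
    intro s hs
    simp only [deriv_eqOn_rpow_mul_comp_rpow hg isOpen_Ioo Set.Ioo_subset_Ioi_self hu hs, H, G,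
      add_sub_assoc, rpow_add hs.1]
    ring
  have hy : r ^ q < 1 := rpow_lt_one hr.1.le hr.2 hq
  have hG : HasDerivAt G ((γ + q) * g' (r ^ q) + q * r ^ q * g'' (r ^ q)) (r ^ q) := by
    refine (((hg _).const_mul γ).add
      (((hasDerivAt_id (r ^ q)).const_mul q).mul (hg' _))).congr_deriv ?_
    simp only [id]
    ring
  have hH : HasDerivAt H ((1 - r ^ q) ^ a *
      (-(a + 1) * G (r ^ q) + (1 - r ^ q) * ((γ + q) * g' (r ^ q) + q * r ^ q * g'' (r ^ q))))
      (r ^ q) := by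
    refine ((((hasDerivAt_id (r ^ q)).const_sub 1).rpow_const
      (Or.inl (sub_pos.2 hy).ne')).mul hG).congr_deriv ?_
    simp only [id, add_sub_cancel_right, rpow_add_one (sub_pos.2 hy).ne']
    ring
  rw [((hflux.eventuallyEq_of_mem (isOpen_Ioo.mem_nhds hr)).deriv_eq),
    (hasDerivAt_rpow_mul_comp_rpow_s18 hr.1 hH).deriv, show p + γ - 1 - 1 = p + γ - 2 by ring]
  simp only [H, rpow_add_one (sub_pos.2 hy).ne']
  ring

end RadialSturmLiouville

lemma radicand_nonneg {c d : ℝ} (hc : 0 ≤ c) (hd : 1 ≤ d) (n : ℕ) (m : ℝ) :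
    0 ≤ c + ((n : ℝ) + d / 2 - 1) ^ 2 + m * (m + d - 2) := by
  have hn : 0 ≤ (n : ℝ) * (n + d - 2) := by
    rcases n.eq_zero_or_pos with rfl | hn
    · simp
    · have : (1 : ℝ) ≤ n := mod_cast hn
      nlinarith
  nlinarith [sq_nonneg (m + d / 2 - 1)]

/-- The radial equation divided by `r^(γ-2) (1-y)^a`, with `g, g₁, g₂` standing for
`g(y), g'(y), g''(y)`. -/
lemma radial_jacobi_identity {a b c d m t γ y g g₁ g₂ : ℝ} (n k : ℕ)
    (hode : (y - 1) * y * g₂ + ((a + b + 2) * y - b - 1) * g₁ = k * (k + a + b + 1) * g)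
    (htb : (t * b) ^ 2 = c + ((n : ℝ) + d / 2 - 1) ^ 2 + m * (m + d - 2))
    (hγ : γ = t * b + 1 - d / 2 - m) :
    -((d + 2 * m - 1 + γ - 1) * (1 - y) * (γ * g + 2 * t * y * g₁) +
        2 * t * y * (-(a + 1) * (γ * g + 2 * t * y * g₁) +
          (1 - y) * ((γ + 2 * t) * g₁ + 2 * t * y * g₂))) + (c + n * (n + d - 2)) * g =
      (2 * t * k + t * b - m + 1 - d / 2) *
        (2 * t * k + t * b + 2 * t * a + 2 * t + m + d / 2 - 1) * y * g := by
  subst hγ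
  linear_combination (2 * t) ^ 2 * y * hode - g * htb

theorem stmt18_general (d m t c : ℝ) (hd : 1 ≤ d) (ht : 0 < t) (hc : 0 < c)
    (n : ℕ) (a : ℝ)
    (b : ℝ) (hb : b = Real.sqrt (c + ((n : ℝ) + d / 2 - 1) ^ 2 + m * (m + d - 2)) / t)
    (k : ℕ)
    (u : ℝ → ℝ)
    (hu : ∀ r ∈ Set.Ioo (0:ℝ) 1,
      u r = r ^ (t * b + 1 - d / 2 - m) * jacobiP k a b (2 * r ^ (2 * t) - 1))
    (chi : ℝ)
    (hchi : chi = (2 * t * (k : ℝ) + t * b - m + 1 - d / 2) *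
        (2 * t * (k : ℝ) + t * b + 2 * t * a + 2 * t + m + d / 2 - 1)) :
    ∀ r ∈ Set.Ioo (0:ℝ) 1,
      -(1 / (r ^ (d + 2 * m - 1) * (1 - r ^ (2 * t)) ^ a)) *
          deriv (fun s => s ^ (d + 2 * m - 1) * (1 - s ^ (2 * t)) ^ (a + 1) * deriv u s) r +
        ((c + (n : ℝ) * ((n : ℝ) + d - 2)) / r ^ 2) * u r =
      chi * r ^ (2 * t - 2) * u r := by
  intro r hr
  have hQ (P : ℝ[X]) (y : ℝ) :
      HasDerivAt (fun y => P.eval (y - 1)) ((derivative P).eval (y - 1)) y :=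
    (P.hasDerivAt _).comp_sub_const y 1
  have hu' : Set.EqOn u
      (fun s => s ^ (t * b + 1 - d / 2 - m) * (Jacobi.poly k a b).eval (s ^ (2 * t) - 1))
      (Set.Ioo 0 1) := fun s hs => by rw [hu s hs, Jacobi.jacobiP_two_mul_sub_one]
  have htb : (t * b) ^ 2 = c + ((n : ℝ) + d / 2 - 1) ^ 2 + m * (m + d - 2) := by
    rw [hb, mul_div_cancel₀ _ ht.ne', sq_sqrt (radicand_nonneg hc.le hd n m)]
  have key := radial_jacobi_identity n k (Jacobi.eval_shift_ode k a b (r ^ (2 * t))) htb rfl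
  have hpow (e : ℝ) : r ^ (e - 2) = r ^ e / r ^ 2 := by rw [rpow_sub hr.1, rpow_two]
  rw [deriv_rpow_mul_one_sub_rpow_mul_deriv (hQ _) (hQ _) _ a (by positivity) hu' hr, hu' hr,
    hchi, hpow, rpow_add hr.1, hpow]
  have hy : r ^ (2 * t) < 1 := rpow_lt_one hr.1.le hr.2 (by positivity)
  have hw : (1 - r ^ (2 * t)) ^ a ≠ 0 := (rpow_pos_of_pos (sub_pos.2 hy) a).ne'
  have hrp : r ^ (d + 2 * m - 1) ≠ 0 := (rpow_pos_of_pos hr.1 _).ne'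
  have hr0 : r ≠ 0 := hr.1.ne'
  set γ := t * b + 1 - d / 2 - m
  field_simp
  linear_combination 4 * r ^ γ * key

theorem stmt18 (d m t c : ℝ) (hd : 1 ≤ d) (hm : -1/2 < m) (ht : 0 < t) (hc : 0 < c)
    (n : ℕ) (a : ℝ) (ha : -1 < a)
    (b : ℝ) (hb : b = Real.sqrt (c + ((n : ℝ) + d / 2 - 1) ^ 2 + m * (m + d - 2)) / t)
    (k : ℕ)
    (u : ℝ → ℝ)
    (hu : ∀ r ∈ Set.Ioo (0:ℝ) 1,
      u r = r ^ (t * b + 1 - d / 2 - m) * jacobiP k a b (2 * r ^ (2 * t) - 1))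
    (chi : ℝ)
    (hchi : chi = (2 * t * (k : ℝ) + t * b - m + 1 - d / 2) *
        (2 * t * (k : ℝ) + t * b + 2 * t * a + 2 * t + m + d / 2 - 1)) :
    ∀ r ∈ Set.Ioo (0:ℝ) 1,
      -(1 / (r ^ (d + 2 * m - 1) * (1 - r ^ (2 * t)) ^ a)) *
          deriv (fun s => s ^ (d + 2 * m - 1) * (1 - s ^ (2 * t)) ^ (a + 1) * deriv u s) r +
        ((c + (n : ℝ) * ((n : ℝ) + d - 2)) / r ^ 2) * u r =
      chi * r ^ (2 * t - 2) * u r :=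
  stmt18_general d m t c hd ht hc n a b hb k u hu chi hchi
end
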